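/- Let T be an inverse semigroup and U a right inverse T-set. Then the map p_U : U × U → T defined by p_U(u,v) := [u, v] is a partial McAlister function; in particular [u,v][v,w] ≤ [u,w] for all u, v, w ∈ U. -/
import Mathlib


/-- An inverse semigroup: a semigroup in which every element has a unique
generalized inverse `star s`. -/
class InverseSemigroup (S : Type*) extends Semigroup S where
  star : S → S
  mul_star_mul : ∀ s : S, s * star s * s = s
  star_mul_star : ∀ s : S, star s * s * star s = star s
  star_unique : ∀ s t : S, s * t * s = s → t * s * t = t → t = star s

postfix:max "⋆" => InverseSemigroup.star

/-- A right regular `T`-set over an inverse semigroup `T`. -/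
structure RightRegularSet (T : Type*) [InverseSemigroup T] (U : Type*) where
  act : U → T → U
  act_act : ∀ (u : U) (t t' : T), act (act u t) t' = act u (t * t')
  pair : U → U → T
  pair_act : ∀ (u u' : U) (t : T), pair u (act u' t) = pair u u' * t
  pair_star : ∀ u u' : U, (pair u u')⋆ = pair u' u
  act_pair_self : ∀ u : U, act u (pair u u) = u

/-- Condition (R-iv): the right regular `T`-set is a right inverse `T`-set. -/
def RightRegularSet.IsInverse {T : Type*} [InverseSemigroup T] {U : Type*}
    (M : RightRegularSet T U) : Prop :=
  ∀ u u' : U, M.act u (M.pair u' u) = u → M.act u' (M.pair u u') = u' → u = u'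

/-- The rank-one map `ω_{v,u} : U → V`, `ω_{v,u}(u') = v [u, u']`. -/
def omega {T : Type*} [InverseSemigroup T] {U V : Type*}
    (MU : RightRegularSet T U) (MV : RightRegularSet T V) (v : V) (u : U) :
    U → V :=
  fun w => MV.act v (MU.pair u w)

/-- The natural partial order on an inverse semigroup: `s ≤ t` iff `s = t s⋆ s`. -/
def isLE {T : Type*} [InverseSemigroup T] (s t : T) : Prop := s = t * s⋆ * s


section Aux

variable {T : Type*} [InverseSemigroup T]

private lemma iss_mul_star_mul (s : T) : s * s⋆ * s = s := InverseSemigroup.mul_star_mul s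

private lemma iss_star_mul_star (s : T) : s⋆ * s * s⋆ = s⋆ := InverseSemigroup.star_mul_star s

private lemma iss_star_star (s : T) : s⋆⋆ = s :=
  (InverseSemigroup.star_unique s⋆ s (iss_star_mul_star s) (iss_mul_star_mul s)).symm

private lemma iss_star_of_idem {e : T} (he : e * e = e) : e⋆ = e :=
  (InverseSemigroup.star_unique e e (by rw [he, he]) (by rw [he, he])).symm

private lemma iss_idem_mul {e f : T} (he : e * e = e) (hf : f * f = f) :
    (e * f) * (e * f) = e * f := by
  set x := (e * f)⋆ with hx
  have h1 : (e * f) * (f * x * e) * (e * f) = e * f := by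
    have : (e * f) * (f * x * e) * (e * f) = (e * f) * x * (e * f) := by
      simp only [mul_assoc]
      rw [← mul_assoc f f, hf, ← mul_assoc e e, he]
    rw [this, iss_mul_star_mul]
  have h2 : (f * x * e) * (e * f) * (f * x * e) = f * x * e := by
    have : (f * x * e) * (e * f) * (f * x * e) = f * (x * (e * f) * x) * e := by
      simp only [mul_assoc]
      rw [← mul_assoc e e, he, ← mul_assoc f f, hf]
    rw [this, iss_star_mul_star]
  have hxe : f * x * e = x := InverseSemigroup.star_unique (e * f) (f * x * e) h1 h2
  have hxx : x * x = x := by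
    conv_lhs => rw [← hxe]
    have : (f * x * e) * (f * x * e) = f * (x * (e * f) * x) * e := by
      simp only [mul_assoc]
    rw [this, iss_star_mul_star, hxe]
  have hefx : e * f = x :=
    calc e * f = (e * f)⋆⋆ := (iss_star_star _).symm
      _ = x⋆ := by rw [← hx]
      _ = x := iss_star_of_idem hxx
  rw [hefx, hxx]

private lemma iss_idem_comm {e f : T} (he : e * e = e) (hf : f * f = f) :
    e * f = f * e := by
  have hef : (e * f) * (e * f) = e * f := iss_idem_mul he hf
  have hfe : (f * e) * (f * e) = f * e := iss_idem_mul hf he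
  have h1 : (e * f) * (f * e) * (e * f) = e * f := by
    have : (e * f) * (f * e) * (e * f) = (e * f) * (e * f) := by
      simp only [mul_assoc]
      rw [← mul_assoc f f, hf, ← mul_assoc e e, he]
    rw [this, hef]
  have h2 : (f * e) * (e * f) * (f * e) = f * e := by
    have : (f * e) * (e * f) * (f * e) = (f * e) * (f * e) := by
      simp only [mul_assoc]
      rw [← mul_assoc e e, he, ← mul_assoc f f, hf]
    rw [this, hfe]
  have := InverseSemigroup.star_unique (e * f) (f * e) h1 h2
  rw [this, iss_star_of_idem hef]

private lemma iss_mul_star_idem (s : T) : (s * s⋆) * (s * s⋆) = s * s⋆ := by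
  rw [← mul_assoc, iss_mul_star_mul]

private lemma iss_star_mul_idem (s : T) : (s⋆ * s) * (s⋆ * s) = s⋆ * s := by
  rw [← mul_assoc, iss_star_mul_star]

private lemma iss_star_mul (s t : T) : (s * t)⋆ = t⋆ * s⋆ := by
  refine (InverseSemigroup.star_unique (s * t) (t⋆ * s⋆) ?_ ?_).symm
  · have : (s * t) * (t⋆ * s⋆) * (s * t) = s * ((t * t⋆) * (s⋆ * s)) * t := by
      simp only [mul_assoc]
    rw [this, iss_idem_comm (iss_mul_star_idem t) (iss_star_mul_idem s)]
    have : s * ((s⋆ * s) * (t * t⋆)) * t = (s * s⋆ * s) * (t * t⋆ * t) := by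
      simp only [mul_assoc]
    rw [this, iss_mul_star_mul, iss_mul_star_mul]
  · have : (t⋆ * s⋆) * (s * t) * (t⋆ * s⋆) = t⋆ * ((s⋆ * s) * (t * t⋆)) * s⋆ := by
      simp only [mul_assoc]
    rw [this, iss_idem_comm (iss_star_mul_idem s) (iss_mul_star_idem t)]
    have : t⋆ * ((t * t⋆) * (s⋆ * s)) * s⋆ = (t⋆ * t * t⋆) * (s⋆ * s * s⋆) := by
      simp only [mul_assoc]
    rw [this, iss_star_mul_star, iss_star_mul_star]

variable {U : Type*} (M : RightRegularSet T U)

private lemma rrs_pair_self_idem (u : U) :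
    M.pair u u * M.pair u u = M.pair u u := by
  conv_lhs => rw [← M.pair_act, M.act_pair_self]

private lemma rrs_pair_mul_self (u v : U) :
    M.pair u v * M.pair v v = M.pair u v := by
  rw [← M.pair_act, M.act_pair_self]

private lemma rrs_self_mul_pair (u v : U) :
    M.pair u u * M.pair u v = M.pair u v := by
  have h := congrArg (·⋆) (rrs_pair_mul_self M v u)
  simpa [iss_star_mul, M.pair_star] using h

/-- Key lemma: `u[u,v] = v[v,u][u,v]`. -/
private lemma rrs_key (hM : M.IsInverse) (u v : U) :
    M.act u (M.pair u v) = M.act v (M.pair v u * M.pair u v) := by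
  have h1 : M.pair u (M.act v ((M.pair u v)⋆ * M.pair u v)) = M.pair u v := by
    rw [M.pair_act, ← mul_assoc, iss_mul_star_mul]
  have h2 : M.pair (M.act v ((M.pair u v)⋆ * M.pair u v)) u = (M.pair u v)⋆ := by
    rw [← M.pair_star u, h1]
  have h3 : M.pair (M.act v ((M.pair u v)⋆ * M.pair u v)) (M.act u (M.pair u v))
      = (M.pair u v)⋆ * M.pair u v := by
    rw [M.pair_act, h2]
  have h4 : M.pair v (M.act u (M.pair u v)) = (M.pair u v)⋆ * M.pair u v := by
    rw [M.pair_act, ← M.pair_star u v]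
  have h5 : M.pair (M.act u (M.pair u v)) (M.act v ((M.pair u v)⋆ * M.pair u v))
      = (M.pair u v)⋆ * M.pair u v := by
    rw [M.pair_act, ← M.pair_star v, h4, iss_star_mul, iss_star_star]
    exact iss_star_mul_idem (M.pair u v)
  have c1 : M.act (M.act u (M.pair u v))
      (M.pair (M.act v ((M.pair u v)⋆ * M.pair u v)) (M.act u (M.pair u v)))
      = M.act u (M.pair u v) := by
    rw [h3, M.act_act, ← mul_assoc, iss_mul_star_mul]
  have c2 : M.act (M.act v ((M.pair u v)⋆ * M.pair u v))
      (M.pair (M.act u (M.pair u v)) (M.act v ((M.pair u v)⋆ * M.pair u v)))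
      = M.act v ((M.pair u v)⋆ * M.pair u v) := by
    rw [h5, M.act_act, iss_star_mul_idem]
  have := hM _ _ c1 c2
  rw [this, M.pair_star u v]

end Aux

theorem stmt19 {T : Type*} [InverseSemigroup T] {U : Type*}
    (M : RightRegularSet T U) (hM : M.IsInverse) :
    (∀ u : U, M.pair u u * M.pair u u = M.pair u u) ∧
    (∀ u v : U, M.pair u u * M.pair u v * M.pair v v = M.pair u v) ∧
    (∀ u v : U, (M.pair u v)⋆ = M.pair v u) ∧
    (∀ u v w : U, isLE (M.pair u v * M.pair v w) (M.pair u w)) := by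
  refine ⟨rrs_pair_self_idem M, ?_, M.pair_star, ?_⟩
  · intro u v
    rw [rrs_self_mul_pair, rrs_pair_mul_self]
  · intro u v w
    set b := M.pair v w with hb
    set c := M.pair u w with hc
    have hbstar : M.pair w v = b⋆ := by rw [hb, M.pair_star]
    have hs : M.pair u v * b = c * (b⋆ * b) := by
      have h1 : M.pair u v * b = M.pair u (M.act v b) := (M.pair_act u v b).symm
      have h2 : M.act v b = M.act w (b⋆ * b) := by
        have := rrs_key M hM v w
        rwa [← hb, hbstar] at this
      rw [h1, h2, M.pair_act, ← hc]
    show M.pair u v * b = c * (M.pair u v * b)⋆ * (M.pair u v * b)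
    set t : T := b⋆ * b with ht
    have htidem : t * t = t := iss_star_mul_idem b
    have hcc : (c⋆ * c) * (c⋆ * c) = c⋆ * c := iss_star_mul_idem c
    rw [hs]
    have hst : (c * t)⋆ * (c * t) = (c⋆ * c) * t := by
      rw [iss_star_mul, iss_star_of_idem htidem]
      calc t * c⋆ * (c * t) = t * (c⋆ * c) * t := by simp only [mul_assoc]
        _ = (c⋆ * c) * t * t := by rw [iss_idem_comm htidem hcc]
        _ = (c⋆ * c) * t := by rw [mul_assoc, htidem]
    rw [mul_assoc, hst]
    calc c * t = c * (c⋆ * c) * t := by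
          conv_rhs => rw [← mul_assoc c c⋆ c, iss_mul_star_mul]
      _ = c * ((c⋆ * c) * t) := by simp only [mul_assoc]
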